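/- arXiv:2107.11568 — 2 statements merged into one kernel-verified Lean document; each statement's English description precedes it below -/
import Mathlib

section
/- There exists a constant c > 0 such that for every s ∈ (0, 1/4], ∑_{m ∈ ℤ³, m ≠ 0} e^{−2|m|² s} / |m|³ ≥ c log(1/s). -/
open Set

/-- Euclidean norm of a point of `ℤ³`. -/
noncomputable def znorm (m : ℤ × ℤ × ℤ) : ℝ :=
  Real.sqrt ((m.1 : ℝ) ^ 2 + (m.2.1 : ℝ) ^ 2 + (m.2.2 : ℝ) ^ 2)

lemma znorm_sq (m : ℤ × ℤ × ℤ) :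
    znorm m ^ 2 = (m.1 : ℝ) ^ 2 + (m.2.1 : ℝ) ^ 2 + (m.2.2 : ℝ) ^ 2 := by
  rw [znorm, Real.sq_sqrt (by positivity)]

lemma point_bound (s : ℝ) (hs : 0 < s) (j : ℕ) (m : ℤ × ℤ × ℤ)
    (h1 : (2:ℤ)^j ≤ m.1) (h1' : m.1 < 2^(j+1))
    (h2 : (2:ℤ)^j ≤ m.2.1) (h2' : m.2.1 < 2^(j+1))
    (h3 : (2:ℤ)^j ≤ m.2.2) (h3' : m.2.2 < 2^(j+1))
    (hsmall : (4:ℝ)^(j+1) * s ≤ 1) :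
    Real.exp (-6) / (24 * Real.sqrt 3 * 8 ^ j) ≤
      Real.exp (-(2 * znorm m ^ 2 * s)) / znorm m ^ 3 := by
  have s3 : Real.sqrt 3 ^ 2 = 3 := Real.sq_sqrt (by norm_num)
  have s3pos : (0:ℝ) < Real.sqrt 3 := Real.sqrt_pos.2 (by norm_num)
  have hA1 : (1:ℝ) ≤ (m.1:ℝ) := by
    have : (1:ℤ) ≤ m.1 := le_trans (one_le_pow₀ (by norm_num)) h1
    exact_mod_cast this
  have hAu : (m.1:ℝ) ≤ 2^(j+1) := by exact_mod_cast h1'.le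
  have hB1 : (0:ℝ) ≤ (m.2.1:ℝ) := by
    have : (0:ℤ) ≤ m.2.1 := le_trans (pow_nonneg (by norm_num) _) h2
    exact_mod_cast this
  have hBu : (m.2.1:ℝ) ≤ 2^(j+1) := by exact_mod_cast h2'.le
  have hC1 : (0:ℝ) ≤ (m.2.2:ℝ) := by
    have : (0:ℤ) ≤ m.2.2 := le_trans (pow_nonneg (by norm_num) _) h3
    exact_mod_cast this
  have hCu : (m.2.2:ℝ) ≤ 2^(j+1) := by exact_mod_cast h3'.le
  have h4 : ((2:ℝ)^(j+1))^2 = 4^(j+1) := by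
    rw [show (4:ℝ) = 2^2 by norm_num, ← pow_mul, ← pow_mul, Nat.mul_comm]
  have hr2_le : znorm m ^ 2 ≤ 3 * 4^(j+1) := by
    rw [znorm_sq]
    have e1 : (m.1:ℝ)^2 ≤ 4^(j+1) := by
      rw [← h4]; exact pow_le_pow_left₀ (by linarith) hAu 2
    have e2 : (m.2.1:ℝ)^2 ≤ 4^(j+1) := by
      rw [← h4]; exact pow_le_pow_left₀ hB1 hBu 2
    have e3 : (m.2.2:ℝ)^2 ≤ 4^(j+1) := by
      rw [← h4]; exact pow_le_pow_left₀ hC1 hCu 2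
    linarith
  have hr2_ge : (1:ℝ) ≤ znorm m ^ 2 := by
    rw [znorm_sq]
    nlinarith [sq_nonneg ((m.2.1:ℝ)), sq_nonneg ((m.2.2:ℝ))]
  have hz0 : 0 ≤ znorm m := Real.sqrt_nonneg _
  have hzpos : 0 < znorm m := by nlinarith [hr2_ge, hz0]
  have hz_le : znorm m ≤ Real.sqrt 3 * 2^(j+1) := by
    have hX : (0:ℝ) < Real.sqrt 3 * 2^(j+1) := by positivity
    have hsq : znorm m ^ 2 ≤ (Real.sqrt 3 * 2^(j+1))^2 := by
      rw [mul_pow, s3, h4]; exact hr2_le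
    nlinarith [hz0, hX, hsq]
  have hz3 : znorm m ^ 3 ≤ 24 * Real.sqrt 3 * 8 ^ j := by
    have h1 : znorm m ^ 3 ≤ (Real.sqrt 3 * 2^(j+1))^3 :=
      pow_le_pow_left₀ hzpos.le hz_le 3
    have h8 : ((2:ℝ)^(j+1))^3 = 8 * 8^j := by
      rw [show (8:ℝ) = 2^3 by norm_num, ← pow_mul, ← pow_mul, ← pow_add]
      congr 1
      ring
    have h2 : (Real.sqrt 3 * 2^(j+1))^3 = 24 * Real.sqrt 3 * 8 ^ j := by
      rw [mul_pow, h8, show Real.sqrt 3 ^ 3 = Real.sqrt 3 ^ 2 * Real.sqrt 3 from pow_succ _ 2, s3]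
      ring
    linarith
  have hexp : Real.exp (-6) ≤ Real.exp (-(2 * znorm m ^ 2 * s)) := by
    apply Real.exp_le_exp.2
    have : 2 * znorm m ^ 2 * s ≤ 6 := by
      have h6 : znorm m ^ 2 * s ≤ 3 * (4^(j+1) * s) := by
        have := mul_le_mul_of_nonneg_right hr2_le hs.le
        linarith
      nlinarith [hsmall]
    linarith
  have hz3pos : 0 < znorm m ^ 3 := by positivity
  exact div_le_div₀ (Real.exp_pos _).le hexp hz3pos hz3

theorem stmt12 :
    ∃ c > 0, ∀ s ∈ Set.Ioc (0:ℝ) (1/4),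
      ENNReal.ofReal (c * Real.log (1 / s)) ≤
        ∑' m : {m : ℤ × ℤ × ℤ // m ≠ 0},
          ENNReal.ofReal (Real.exp (-(2 * znorm m ^ 2 * s)) / znorm m ^ 3) := by
  have s3pos : (0:ℝ) < Real.sqrt 3 := Real.sqrt_pos.2 (by norm_num)
  have hlog4 : (0:ℝ) < Real.log 4 := Real.log_pos (by norm_num)
  refine ⟨Real.exp (-6) / (48 * Real.sqrt 3 * Real.log 4), by positivity, ?_⟩
  rintro s ⟨hs0, hs4⟩
  set L : ℝ := Real.log (1/s) / Real.log 4 with hLdef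
  set K : ℕ := Nat.floor L with hKdef
  have h1s : (4:ℝ) ≤ 1/s := by rw [le_div_iff₀ hs0]; linarith
  have hL1 : (1:ℝ) ≤ L := by
    rw [hLdef, le_div_iff₀ hlog4, one_mul]
    exact Real.log_le_log (by norm_num) h1s
  have hK1 : 1 ≤ K := Nat.le_floor (by exact_mod_cast hL1)
  have hKL : (K:ℝ) ≤ L := Nat.floor_le (by linarith)
  have hpowK : (4:ℝ)^K * s ≤ 1 := by
    have h4K : (4:ℝ)^K ≤ 1/s := by
      calc (4:ℝ)^K = (4:ℝ)^(K:ℝ) := by rw [Real.rpow_natCast]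
        _ ≤ (4:ℝ)^L := Real.rpow_le_rpow_of_exponent_le (by norm_num) hKL
        _ = 1/s := by
            rw [hLdef, Real.rpow_def_of_pos (by norm_num : (0:ℝ) < 4),
              mul_div_cancel₀ _ hlog4.ne', Real.exp_log (by positivity)]
    calc (4:ℝ)^K * s ≤ (1/s) * s := by
          apply mul_le_mul_of_nonneg_right h4K hs0.le
      _ = 1 := by field_simp
  have hhalf : L / 2 ≤ (K:ℝ) := by
    rcases le_or_gt 2 L with h | h
    · have := Nat.lt_floor_add_one L
      rw [← hKdef] at this
      linarith
    · have : (1:ℝ) ≤ (K:ℝ) := by exact_mod_cast hK1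
      linarith
  -- set up the finsets
  set f : ℤ × ℤ × ℤ → ℝ := fun m => Real.exp (-(2 * znorm m ^ 2 * s)) / znorm m ^ 3 with hfdef
  have hfnn : ∀ m, 0 ≤ f m := by
    intro m
    exact div_nonneg (Real.exp_pos _).le (pow_nonneg (Real.sqrt_nonneg _) 3)
  set I : ℕ → Finset ℤ := fun j => Finset.Ico ((2:ℤ)^j) (2^(j+1)) with hIdef
  set S : ℕ → Finset (ℤ × ℤ × ℤ) := fun j => (I j) ×ˢ ((I j) ×ˢ (I j)) with hSdef
  set F : Finset (ℤ × ℤ × ℤ) := (Finset.range K).biUnion S with hFdef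
  have hmemS : ∀ j m, m ∈ S j ↔
      ((2:ℤ)^j ≤ m.1 ∧ m.1 < 2^(j+1)) ∧ ((2:ℤ)^j ≤ m.2.1 ∧ m.2.1 < 2^(j+1))
        ∧ ((2:ℤ)^j ≤ m.2.2 ∧ m.2.2 < 2^(j+1)) := by
    intro j m
    simp [hSdef, hIdef, Finset.mem_product, Finset.mem_Ico, and_assoc]
  -- shell sum bound
  have hshell : ∀ j ∈ Finset.range K,
      Real.exp (-6) / (24 * Real.sqrt 3) ≤ ∑ m ∈ S j, f m := by
    intro j hj
    have hjK : j + 1 ≤ K := Finset.mem_range.1 hj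
    have hsmall : (4:ℝ)^(j+1) * s ≤ 1 := by
      have : (4:ℝ)^(j+1) ≤ (4:ℝ)^K := pow_le_pow_right₀ (by norm_num) hjK
      calc (4:ℝ)^(j+1) * s ≤ (4:ℝ)^K * s := by
            apply mul_le_mul_of_nonneg_right this hs0.le
        _ ≤ 1 := hpowK
    have hb : ∀ m ∈ S j, Real.exp (-6) / (24 * Real.sqrt 3 * 8 ^ j) ≤ f m := by
      intro m hm
      rw [hmemS] at hm
      exact point_bound s hs0 j m hm.1.1 hm.1.2 hm.2.1.1 hm.2.1.2 hm.2.2.1 hm.2.2.2 hsmall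
    have hcardI : (I j).card = 2^j := by
      rw [hIdef]
      simp only [Int.card_Ico]
      have : (2:ℤ)^(j+1) - 2^j = ((2^j : ℕ) : ℤ) := by push_cast; ring
      rw [this, Int.toNat_natCast]
    have hcard : (S j).card = 8^j := by
      rw [hSdef]
      simp only [Finset.card_product, hcardI]
      rw [show (8:ℕ) = 2^3 from rfl, ← pow_mul, ← pow_add, ← pow_add]
      congr 1
      ring
    calc Real.exp (-6) / (24 * Real.sqrt 3)
        = (8^j : ℕ) • (Real.exp (-6) / (24 * Real.sqrt 3 * 8 ^ j)) := by
          rw [nsmul_eq_mul]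
          push_cast
          field_simp
      _ = (S j).card • (Real.exp (-6) / (24 * Real.sqrt 3 * 8 ^ j)) := by rw [hcard]
      _ ≤ ∑ m ∈ S j, f m := Finset.card_nsmul_le_sum _ _ _ hb
  -- disjointness
  have hdisj : ∀ j l : ℕ, j < l → Disjoint (S j) (S l) := by
    intro j l hjl
    rw [Finset.disjoint_left]
    intro m hmj hml
    rw [hmemS] at hmj hml
    have h2 : (2:ℤ)^(j+1) ≤ 2^l := pow_le_pow_right₀ (by norm_num) hjl
    linarith [hmj.1.2, hml.1.1]
  have hFsum : (K:ℝ) * (Real.exp (-6) / (24 * Real.sqrt 3)) ≤ ∑ m ∈ F, f m := by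
    rw [hFdef, Finset.sum_biUnion]
    · calc (K:ℝ) * (Real.exp (-6) / (24 * Real.sqrt 3))
          = ∑ _j ∈ Finset.range K, Real.exp (-6) / (24 * Real.sqrt 3) := by
            rw [Finset.sum_const, Finset.card_range, nsmul_eq_mul]
        _ ≤ ∑ j ∈ Finset.range K, ∑ m ∈ S j, f m := Finset.sum_le_sum hshell
    · intro j _ l _ hjl
      rcases lt_or_gt_of_ne hjl with h | h
      · exact hdisj j l h
      · exact (hdisj l j h).symm
  have hne : ∀ m ∈ F, m ≠ (0 : ℤ × ℤ × ℤ) := by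
    intro m hm h0
    rw [hFdef, Finset.mem_biUnion] at hm
    obtain ⟨j, _, hj⟩ := hm
    rw [hmemS] at hj
    have := hj.1.1
    rw [h0] at this
    simp at this
    have : (0:ℤ) < 2^j := pow_pos (by norm_num) j
    omega
  -- bridge to the tsum
  have key : ENNReal.ofReal (∑ m ∈ F, f m) ≤
      ∑' m : {m : ℤ × ℤ × ℤ // m ≠ 0}, ENNReal.ofReal (f m) := by
    rw [ENNReal.ofReal_sum_of_nonneg (fun m _ => hfnn m)]
    have e1 : ∑ m ∈ F.subtype (fun m => m ≠ (0 : ℤ × ℤ × ℤ)), ENNReal.ofReal (f m)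
        = ∑ m ∈ F, ENNReal.ofReal (f m) :=
      Finset.sum_subtype_of_mem (fun m => ENNReal.ofReal (f m)) hne
    rw [← e1]
    exact ENNReal.sum_le_tsum _
  refine le_trans ?_ key
  apply ENNReal.ofReal_le_ofReal
  have hc : Real.exp (-6) / (48 * Real.sqrt 3 * Real.log 4) * Real.log (1/s)
      = (Real.exp (-6) / (24 * Real.sqrt 3)) * (L / 2) := by
    rw [hLdef]
    ring
  rw [hc]
  calc (Real.exp (-6) / (24 * Real.sqrt 3)) * (L / 2)
      ≤ (Real.exp (-6) / (24 * Real.sqrt 3)) * K := by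
        apply mul_le_mul_of_nonneg_left hhalf (by positivity)
    _ = (K:ℝ) * (Real.exp (-6) / (24 * Real.sqrt 3)) := by ring
    _ ≤ ∑ m ∈ F, f m := hFsum
end

section
/- There exists a constant c > 0 such that for every s ∈ (0,1] and every m₄ ∈ ℤ³ with m₄ ≠ 0, ∑_{m₃ ∈ ℤ³, m₃ ≠ 0, m₃ ≠ −m₄} e^{−|m₃|² s} / (|m₃| · |m₃ + m₄|) ≤ c / (s |m₄|). -/
open ENNReal Real

lemma exp_neg_sq_mul_div_mul_le {a b d s : ℝ} (ha : 0 < a) (hb : 0 < b) (hd : 0 < d)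
    (hdab : d ≤ a + b) (hs : 0 ≤ s) :
    exp (-(a ^ 2 * s)) / (a * b) ≤ 2 / d * (exp (-(a ^ 2 * s)) / a + exp (-(b ^ 2 * s)) / b) := by
  rcases le_total a b with hab | hba
  · have hb_inv : 1 / b ≤ 2 / d := by rw [div_le_div_iff₀ hb hd]; linarith
    calc exp (-(a ^ 2 * s)) / (a * b) = exp (-(a ^ 2 * s)) / a * (1 / b) := by ring
      _ ≤ exp (-(a ^ 2 * s)) / a * (2 / d) := by gcongr
      _ ≤ 2 / d * (exp (-(a ^ 2 * s)) / a + exp (-(b ^ 2 * s)) / b) := by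
        rw [mul_comm]; gcongr; exact le_add_of_nonneg_right (by positivity)
  · have ha_inv : 1 / a ≤ 2 / d := by rw [div_le_div_iff₀ ha hd]; linarith
    have hexp : exp (-(a ^ 2 * s)) ≤ exp (-(b ^ 2 * s)) := by gcongr
    calc exp (-(a ^ 2 * s)) / (a * b) ≤ exp (-(b ^ 2 * s)) / (a * b) := by gcongr
      _ = 1 / a * (exp (-(b ^ 2 * s)) / b) := by ring
      _ ≤ 2 / d * (exp (-(a ^ 2 * s)) / a + exp (-(b ^ 2 * s)) / b) := by
        gcongr; exact le_add_of_nonneg_left (by positivity)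

lemma exp_neg_div_one_sub_exp_neg_sq_le {x : ℝ} (hx : 0 < x) :
    exp (-x) / (1 - exp (-x)) ^ 2 ≤ 1 / x ^ 2 := by
  set a := exp (x / 2)
  have ha : 0 < a := exp_pos _
  have hsinh : x ≤ a - a⁻¹ := by
    have := (self_le_sinh_iff (x := x / 2)).2 (by positivity)
    rw [sinh_eq, exp_neg] at this
    linarith
  have hexp : exp (-x) = (a ^ 2)⁻¹ := by
    rw [← exp_nat_mul, ← exp_neg]; push_cast; ring_nf
  calc exp (-x) / (1 - exp (-x)) ^ 2 = 1 / (a - a⁻¹) ^ 2 := by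
        rw [hexp]; field_simp
    _ ≤ 1 / x ^ 2 := by gcongr

lemma tsum_mul_exp_neg_sq_mul_le {t : ℝ} (ht : 0 < t) :
    ∑' k : ℕ, ENNReal.ofReal (k * exp (-(k ^ 2 * t))) ≤ ENNReal.ofReal (exp (1 / 4) / t) := by
  set r := exp (-√t)
  have hr : ‖r‖ < 1 := by
    rw [norm_of_nonneg (exp_pos _).le, exp_lt_one_iff]; simpa using ht
  have hterm (k : ℕ) : (k : ℝ) * exp (-(k ^ 2 * t)) ≤ exp (1 / 4) * (k * r ^ k) := by
    rw [← exp_nat_mul, mul_left_comm, ← exp_add]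
    gcongr
    nlinarith [sq_nonneg (k * √t - 1 / 2), sq_sqrt ht.le]
  calc ∑' k : ℕ, ENNReal.ofReal (k * exp (-(k ^ 2 * t)))
      ≤ ∑' k : ℕ, ENNReal.ofReal (exp (1 / 4) * (k * r ^ k)) :=
        ENNReal.tsum_le_tsum fun k => ENNReal.ofReal_le_ofReal (hterm k)
    _ = ENNReal.ofReal (exp (1 / 4) * (r / (1 - r) ^ 2)) := by
        rw [← ENNReal.ofReal_tsum_of_nonneg (fun k => by positivity)
          ((by simpa using summable_pow_mul_geometric_of_norm_lt_one 1 hr :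
            Summable fun k : ℕ => (k : ℝ) * r ^ k).mul_left _),
          tsum_mul_left, tsum_coe_mul_geometric_of_norm_lt_one hr]
    _ ≤ ENNReal.ofReal (exp (1 / 4) / t) := by
        rw [div_eq_mul_one_div _ t]
        gcongr ENNReal.ofReal (_ * ?_)
        calc r / (1 - r) ^ 2 ≤ 1 / √t ^ 2 :=
              exp_neg_div_one_sub_exp_neg_sq_le (sqrt_pos.2 ht)
          _ = 1 / t := by rw [sq_sqrt ht.le]

lemma znorm_eq_norm (m : ℤ × ℤ × ℤ) :
    znorm m = ‖(WithLp.toLp 2 ![(m.1 : ℝ), m.2.1, m.2.2] : EuclideanSpace ℝ (Fin 3))‖ := by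
  simp [EuclideanSpace.norm_eq, znorm, Fin.sum_univ_three]

lemma znorm_add_le (m n : ℤ × ℤ × ℤ) : znorm (m + n) ≤ znorm m + znorm n := by
  have hadd : (WithLp.toLp 2 ![((m + n).1 : ℝ), (m + n).2.1, (m + n).2.2] : EuclideanSpace ℝ (Fin 3))
      = WithLp.toLp 2 ![(m.1 : ℝ), m.2.1, m.2.2] + WithLp.toLp 2 ![(n.1 : ℝ), n.2.1, n.2.2] := by
    ext i
    fin_cases i <;> simp
  simpa only [znorm_eq_norm, hadd] using norm_add_le _ _

lemma znorm_neg (m : ℤ × ℤ × ℤ) : znorm (-m) = znorm m := by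
  simp [znorm]

def supNorm (m : ℤ × ℤ × ℤ) : ℕ := max m.1.natAbs (max m.2.1.natAbs m.2.2.natAbs)

lemma supNorm_le_znorm (m : ℤ × ℤ × ℤ) : (supNorm m : ℝ) ≤ znorm m := by
  rw [znorm, Real.le_sqrt (by positivity) (by positivity)]
  have hcases : supNorm m = m.1.natAbs ∨ supNorm m = m.2.1.natAbs ∨ supNorm m = m.2.2.natAbs := by
    unfold supNorm; omega
  rcases hcases with h | h | h <;> rw [h, Nat.cast_natAbs, Int.cast_abs, sq_abs] <;>
    nlinarith [sq_nonneg (m.1 : ℝ), sq_nonneg (m.2.1 : ℝ), sq_nonneg (m.2.2 : ℝ)]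

lemma one_le_supNorm {m : ℤ × ℤ × ℤ} (hm : m ≠ 0) : 1 ≤ supNorm m := by
  obtain ⟨a, b, c⟩ := m
  have : ¬(a = 0 ∧ b = 0 ∧ c = 0) := fun h => hm (by simp [h.1, h.2.1, h.2.2])
  simp only [supNorm]
  omega

lemma one_le_znorm {m : ℤ × ℤ × ℤ} (hm : m ≠ 0) : 1 ≤ znorm m :=
  le_trans (by exact_mod_cast one_le_supNorm hm) (supNorm_le_znorm m)

noncomputable def supNormBox (k : ℕ) : Finset (ℤ × ℤ × ℤ) :=
  Finset.Icc (-(k : ℤ)) k ×ˢ Finset.Icc (-(k : ℤ)) k ×ˢ Finset.Icc (-(k : ℤ)) k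

lemma mem_supNormBox {k : ℕ} {m : ℤ × ℤ × ℤ} : m ∈ supNormBox k ↔ supNorm m ≤ k := by
  simp only [supNormBox, supNorm, Finset.mem_product, Finset.mem_Icc]
  omega

lemma card_supNormBox (k : ℕ) : (supNormBox k).card = (2 * k + 1) ^ 3 := by
  have hJ : (Finset.Icc (-(k : ℤ)) k).card = 2 * k + 1 := by rw [Int.card_Icc]; omega
  simp only [supNormBox, Finset.card_product, hJ]
  ring

lemma encard_supNorm_preimage_le {k : ℕ} (hk : 1 ≤ k) :
    (supNorm ⁻¹' {k}).encard ≤ 26 * k ^ 2 := by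
  have hshell : supNorm ⁻¹' {k} = ↑(supNormBox k \ supNormBox (k - 1)) := by
    ext m
    simp only [Set.mem_preimage, Set.mem_singleton_iff, Finset.coe_sdiff, Set.mem_sdiff,
      Finset.mem_coe, mem_supNormBox]
    omega
  have hsub : supNormBox (k - 1) ⊆ supNormBox k := fun m hm => by
    rw [mem_supNormBox] at *; omega
  rw [hshell, Set.encard_coe_eq_coe_finsetCard, Finset.card_sdiff_of_subset hsub,
    card_supNormBox, card_supNormBox]
  obtain ⟨j, rfl⟩ := Nat.exists_eq_add_of_le' hk
  norm_cast
  rw [Nat.add_sub_cancel, Nat.sub_le_iff_le_add]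
  ring_nf
  omega

lemma tsum_exp_neg_znorm_sq_mul_div_znorm_le {t : ℝ} (ht : 0 < t) :
    ∑' m : ℤ × ℤ × ℤ, ENNReal.ofReal (exp (-(znorm m ^ 2 * t)) / znorm m)
      ≤ ENNReal.ofReal (26 * exp (1 / 4) / t) := by
  set H : ℕ → ℝ≥0∞ := fun k => ENNReal.ofReal (exp (-((k : ℝ) ^ 2 * t)) / k)
  have hpoint (m : ℤ × ℤ × ℤ) :
      ENNReal.ofReal (exp (-(znorm m ^ 2 * t)) / znorm m) ≤ H (supNorm m) := by
    rcases eq_or_ne m 0 with rfl | hm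
    · simp [znorm]
    · have hpos : (0 : ℝ) < supNorm m := by exact_mod_cast one_le_supNorm hm
      have hle := supNorm_le_znorm m
      exact ENNReal.ofReal_le_ofReal (by gcongr)
  have hshell (k : ℕ) :
      (supNorm ⁻¹' {k}).encard * H k ≤ ENNReal.ofReal (26 * (k * exp (-(k ^ 2 * t)))) := by
    rcases Nat.eq_zero_or_pos k with rfl | hk
    · simp [H]
    calc (supNorm ⁻¹' {k}).encard * H k ≤ ((26 * k ^ 2 : ℕ) : ℝ≥0∞) * H k := by
          gcongr
          exact_mod_cast encard_supNorm_preimage_le hk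
      _ = ENNReal.ofReal (26 * (k * exp (-(k ^ 2 * t)))) := by
          rw [← ENNReal.ofReal_natCast, ← ENNReal.ofReal_mul (by positivity)]
          congr 1
          field_simp
          push_cast
          ring
  calc ∑' m : ℤ × ℤ × ℤ, ENNReal.ofReal (exp (-(znorm m ^ 2 * t)) / znorm m)
      ≤ ∑' m, H (supNorm m) := ENNReal.tsum_le_tsum hpoint
    _ = ∑' k, (supNorm ⁻¹' {k}).encard * H k := by
        rw [← ENNReal.tsum_fiberwise _ supNorm]
        refine tsum_congr fun k => ?_
        rw [← ENNReal.tsum_set_const]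
        exact tsum_congr fun m => by rw [m.2]
    _ ≤ ∑' k : ℕ, ENNReal.ofReal 26 * ENNReal.ofReal (k * exp (-(k ^ 2 * t))) := by
        refine ENNReal.tsum_le_tsum fun k => (hshell k).trans_eq ?_
        rw [ENNReal.ofReal_mul (by norm_num)]
    _ ≤ ENNReal.ofReal (26 * exp (1 / 4) / t) := by
        rw [ENNReal.tsum_mul_left, mul_div_assoc, ENNReal.ofReal_mul (by norm_num)]
        gcongr
        exact tsum_mul_exp_neg_sq_mul_le ht

lemma ofReal_exp_div_znorm_mul_znorm_le {s : ℝ} (hs : 0 ≤ s) {m n : ℤ × ℤ × ℤ}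
    (hm : m ≠ 0) (hmn : m + n ≠ 0) (hn : n ≠ 0) :
    ENNReal.ofReal (exp (-(znorm m ^ 2 * s)) / (znorm m * znorm (m + n)))
      ≤ ENNReal.ofReal (2 / znorm n) *
        (ENNReal.ofReal (exp (-(znorm m ^ 2 * s)) / znorm m)
          + ENNReal.ofReal (exp (-(znorm (m + n) ^ 2 * s)) / znorm (m + n))) := by
  have ha := one_le_znorm hm
  have hb := one_le_znorm hmn
  have hd := one_le_znorm hn
  have htri : znorm n ≤ znorm m + znorm (m + n) := by
    simpa [znorm_neg] using znorm_add_le (-m) (m + n)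
  rw [← ENNReal.ofReal_add (by positivity) (by positivity), ← ENNReal.ofReal_mul (by positivity)]
  exact ENNReal.ofReal_le_ofReal <|
    exp_neg_sq_mul_div_mul_le (by linarith) (by linarith) (by linarith) htri hs

theorem stmt14 :
    ∃ c > 0, ∀ s ∈ Set.Ioc (0:ℝ) 1, ∀ m₄ : ℤ × ℤ × ℤ, m₄ ≠ 0 →
      (∑' m₃ : {m : ℤ × ℤ × ℤ // m ≠ 0 ∧ m ≠ -m₄},
          ENNReal.ofReal
            (Real.exp (-(znorm m₃ ^ 2 * s)) / (znorm m₃ * znorm (↑m₃ + m₄)))) ≤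
        ENNReal.ofReal (c / (s * znorm m₄)) := by
  refine ⟨104 * exp (1 / 4), by positivity, ?_⟩
  rintro s ⟨hs, -⟩ m₄ hm₄
  set g : ℤ × ℤ × ℤ → ℝ≥0∞ := fun m => ENNReal.ofReal (exp (-(znorm m ^ 2 * s)) / znorm m)
  have hd : 0 < znorm m₄ := zero_lt_one.trans_le (one_le_znorm hm₄)
  calc _ ≤ ∑' m : {m : ℤ × ℤ × ℤ // m ≠ 0 ∧ m ≠ -m₄},
          ENNReal.ofReal (2 / znorm m₄) * (g m + g (m + m₄)) :=
        ENNReal.tsum_le_tsum fun m => ofReal_exp_div_znorm_mul_znorm_le hs.le m.2.1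
          (fun h => m.2.2 (eq_neg_of_add_eq_zero_left h)) hm₄
    _ ≤ ∑' m, ENNReal.ofReal (2 / znorm m₄) * (g m + g (m + m₄)) :=
        ENNReal.tsum_comp_le_tsum_of_injective Subtype.val_injective _
    _ = ENNReal.ofReal (2 / znorm m₄) * (∑' m, g m + ∑' m, g m) := by
        rw [ENNReal.tsum_mul_left, ENNReal.tsum_add, ← (Equiv.addRight m₄).tsum_eq g]
        rfl
    _ ≤ ENNReal.ofReal (2 / znorm m₄) *
          (ENNReal.ofReal (26 * exp (1 / 4) / s) + ENNReal.ofReal (26 * exp (1 / 4) / s)) := by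
        gcongr <;> exact tsum_exp_neg_znorm_sq_mul_div_znorm_le hs
    _ = ENNReal.ofReal (104 * exp (1 / 4) / (s * znorm m₄)) := by
        rw [← ENNReal.ofReal_add (by positivity) (by positivity),
          ← ENNReal.ofReal_mul (by positivity)]
        congr 1
        field_simp
        ring
end
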